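/- Let fhat be a proper probability generating function with fhat'(1) = infinity, smallest fixed point qhat in [0,1), and iterates fhat(t,s). Let b > 1 and let psi : (0,infinity) -> (0,1) be continuous and strictly increasing with psi(u) -> 0 as u -> 0+ and psi(u) -> 1 as u -> infinity, such that for every u in (0,infinity) and every real sequence (u_t) with u_t -> u, fhat(t, exp(-exp(-u_t * b^t))) -> qhat + (1-qhat)*psi(u) as t -> infinity. For r > 1 define f_r(s) = r*fhat(s/r) with iterates f_r(t,s) = r*fhat(t,s/r). Let r_n > 1 and t_n -> infinity satisfy b^{-t_n} * ln(1/(r_n - 1)) -> y for some y in (0,infinity). Then: (i) f_{r_n}(t_n,1) - f_{r_n}(t_n,0) converges to (1-qhat)*psi(y); and (ii) for every lambda > 0 and every u in (0,y), (f_{r_n}(t_n, exp(-lambda*exp(-u*b^{t_n}))) - f_{r_n}(t_n,0)) / (f_{r_n}(t_n,1) - f_{r_n}(t_n,0)) converges to psi(u)/psi(y). Probabilistically, P(T_n > t_n) -> (1-qhat)psi(y) and P(b^{-t_n} ln Z_n(t_n) <= u | T_n > t_n) -> psi(u)/psi(y) for u in (0,y). -/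

import Mathlib

/-!
Both arguments are put in Darling's form `exp (-exp (-v * b ^ t))`: `1 / r = exp (-log r)` and
`exp (-λ exp (-u b^t)) / r = exp (-(λ exp (-u b^t) + log r))`. Since
`log r_n ~ r_n - 1 = exp (-(y + o(1)) b^{t_n})`, the corresponding `v_n` tend to `y`, resp. to `u`
(for `u < y` the term `log r_n` is negligible against `exp (-u b^{t_n})`). Darling's law, which
transfers from sequences indexed by `t` to any times `t_n → ∞`, then gives the limits of
`fhat(t_n, ·)`; finally `r_n → 1` and `fhat(t_n, 0) → qhat`, the least fixed point.
-/

open Filter Finset Topology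

theorem tendsto_apply_of_forall_seq {α β : Type*} [TopologicalSpace α] [TopologicalSpace β]
    {F : ℕ → α → β} {a : α} {L : β}
    (hF : ∀ w : ℕ → α, Tendsto w atTop (𝓝 a) → Tendsto (fun τ => F τ (w τ)) atTop (𝓝 L))
    {t : ℕ → ℕ} (ht : Tendsto t atTop atTop) {v : ℕ → α} (hv : Tendsto v atTop (𝓝 a)) :
    Tendsto (fun n => F (t n) (v n)) atTop (𝓝 L) := by
  classical
  intro U hU
  show ∀ᶠ n in atTop, F (t n) (v n) ∈ U
  -- At each time `τ`, pick an index `n` with `t n = τ` that is bad for `U`, if there is one;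
  -- this still tends to `a`, since only finitely many `n` have `t n` below a given bound.
  let w : ℕ → α := fun τ =>
    if h : ∃ n, t n = τ ∧ F τ (v n) ∉ U then v h.choose else a
  have hw : Tendsto w atTop (𝓝 a) := by
    intro V hV
    obtain ⟨N, hN⟩ := eventually_atTop.1 (hv hV)
    have hlarge : ∀ᶠ τ in atTop, ∀ n ∈ Finset.range N, t n < τ :=
      (eventually_all_finset _).2 fun n _ => eventually_gt_atTop (t n)
    show ∀ᶠ τ in atTop, w τ ∈ V
    filter_upwards [hlarge] with τ hτ
    simp only [w]
    split_ifs with h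
    · refine hN _ (not_lt.1 fun hlt => ?_)
      exact (hτ _ (Finset.mem_range.2 hlt)).ne h.choose_spec.1
    · exact mem_of_mem_nhds hV
  filter_upwards [ht.eventually (hF w hw hU)] with n hn
  by_contra hbad
  have h : ∃ m, t m = t n ∧ F (t n) (v m) ∉ U := ⟨n, rfl, hbad⟩
  simp only [w, dif_pos h] at hn
  exact h.choose_spec.2 hn

theorem norm_mul_pow_le_abs (c : ℝ) {x : ℝ} (hx : x ∈ Set.Icc (-1) 1) (k : ℕ) :
    ‖c * x ^ k‖ ≤ |c| := by
  rw [norm_mul, norm_pow, Real.norm_eq_abs]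
  exact mul_le_of_le_one_right (abs_nonneg _) (pow_le_one₀ (abs_nonneg x) (abs_le.2 hx))

theorem summable_mul_pow {p : ℕ → ℝ} (hp : Summable p) {x : ℝ} (hx : x ∈ Set.Icc (-1) 1) :
    Summable fun k => p k * x ^ k :=
  hp.abs.of_norm_bounded fun k => norm_mul_pow_le_abs (p k) hx k

theorem continuousOn_tsum_mul_pow {p : ℕ → ℝ} (hp : Summable p) :
    ContinuousOn (fun x => ∑' k, p k * x ^ k) (Set.Icc (-1) 1) :=
  continuousOn_tsum (fun k => (continuous_const.mul (continuous_pow k)).continuousOn) hp.abs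
    fun k _ hx => norm_mul_pow_le_abs (p k) hx k

theorem monotoneOn_tsum_mul_pow {p : ℕ → ℝ} (hp0 : ∀ k, 0 ≤ p k) (hp : Summable p) :
    MonotoneOn (fun x => ∑' k, p k * x ^ k) (Set.Icc 0 1) := fun x hx y hy hxy =>
  (summable_mul_pow hp ⟨by linarith [hx.1], hx.2⟩).tsum_le_tsum
    (fun k => mul_le_mul_of_nonneg_left (pow_le_pow_left₀ hx.1 hxy k) (hp0 k))
    (summable_mul_pow hp ⟨by linarith [hy.1], hy.2⟩)

theorem tendsto_iterate_zero_of_monotoneOn {f : ℝ → ℝ} {q : ℝ} (hq : 0 ≤ q)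
    (hmono : MonotoneOn f (Set.Icc 0 q)) (hcont : ContinuousOn f (Set.Icc 0 q)) (hf0 : 0 ≤ f 0)
    (hfix : f q = q) (hmin : ∀ x ∈ Set.Icc 0 q, f x = x → q ≤ x) :
    Tendsto (fun n => f^[n] 0) atTop (𝓝 q) := by
  have hmaps : Set.MapsTo f (Set.Icc 0 q) (Set.Icc 0 q) := fun x hx =>
    ⟨hf0.trans (hmono ⟨le_rfl, hq⟩ hx hx.1), hfix ▸ hmono hx ⟨hq, le_rfl⟩ hx.2⟩
  have hmem : ∀ n, f^[n] 0 ∈ Set.Icc 0 q := fun n => hmaps.iterate n ⟨le_rfl, hq⟩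
  have hincr : Monotone fun n => f^[n] 0 := by
    refine monotone_nat_of_le_succ fun n => ?_
    induction n with
    | zero => exact hf0
    | succ n ih =>
      simpa only [Function.iterate_succ_apply' f] using hmono (hmem n) (hmem (n + 1)) ih
  have hbdd : BddAbove (Set.range fun n => f^[n] 0) :=
    ⟨q, Set.forall_mem_range.2 fun n => (hmem n).2⟩
  set L := ⨆ n, f^[n] 0
  have hL : Tendsto (fun n => f^[n] 0) atTop (𝓝 L) := tendsto_atTop_ciSup hincr hbdd
  have hLmem : L ∈ Set.Icc 0 q := isClosed_Icc.mem_of_tendsto hL (Eventually.of_forall hmem)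
  have hfixL : f L = L := by
    refine tendsto_nhds_unique ?_ ((tendsto_add_atTop_iff_nat 1).2 hL)
    simp only [Function.iterate_succ_apply']
    exact (hcont L hLmem).tendsto.comp
      (tendsto_nhdsWithin_iff.2 ⟨hL, Eventually.of_forall hmem⟩)
  rwa [le_antisymm hLmem.2 (hmin L hLmem hfixL)] at hL

theorem tendsto_iterate_zero_of_tsum_mul_pow {p : ℕ → ℝ} {f : ℝ → ℝ} (hp0 : ∀ k, 0 ≤ p k)
    (hp : Summable p) (hf : ∀ s, f s = ∑' k, p k * s ^ k) {q : ℝ} (hq : q ∈ Set.Icc 0 1)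
    (hfix : f q = q) (hmin : ∀ x ∈ Set.Icc 0 1, f x = x → q ≤ x) :
    Tendsto (fun n => f^[n] 0) atTop (𝓝 q) := by
  obtain rfl : f = fun s => ∑' k, p k * s ^ k := funext hf
  refine tendsto_iterate_zero_of_monotoneOn hq.1
    ((monotoneOn_tsum_mul_pow hp0 hp).mono (Set.Icc_subset_Icc_right hq.2))
    ((continuousOn_tsum_mul_pow hp).mono (Set.Icc_subset_Icc (by norm_num) hq.2))
    (tsum_nonneg fun k => mul_nonneg (hp0 k) (pow_nonneg le_rfl k)) hfix
    fun x hx => hmin x ⟨hx.1, hx.2.trans hq.2⟩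

theorem tendsto_iterate_exp_neg {f : ℝ → ℝ} {b u L : ℝ} (hb : b ≠ 0)
    (hF : ∀ w : ℕ → ℝ, Tendsto w atTop (𝓝 u) →
      Tendsto (fun τ : ℕ => f^[τ] (Real.exp (-Real.exp (-w τ * b ^ τ)))) atTop (𝓝 L))
    {t : ℕ → ℕ} (ht : Tendsto t atTop atTop) {a : ℕ → ℝ} (ha : ∀ n, 0 < a n)
    (hau : Tendsto (fun n => -Real.log (a n) / b ^ t n) atTop (𝓝 u)) :
    Tendsto (fun n => f^[t n] (Real.exp (-a n))) atTop (𝓝 L) := by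
  refine (tendsto_apply_of_forall_seq
    (F := fun τ x => f^[τ] (Real.exp (-Real.exp (-x * b ^ τ)))) hF ht hau).congr fun n => ?_
  rw [neg_div, neg_neg, div_mul_cancel₀ _ (pow_ne_zero _ hb), Real.exp_log (ha n)]

theorem Filter.Tendsto.log_div_atTop {ι : Type*} {l : Filter ι} {c B : ι → ℝ} {c₀ : ℝ}
    (hc : Tendsto c l (𝓝 c₀)) (hc₀ : c₀ ≠ 0) (hB : Tendsto B l atTop) :
    Tendsto (fun i => Real.log (c i) / B i) l (𝓝 0) :=
  ((Real.continuousAt_log hc₀).tendsto.comp hc).div_atTop hB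

theorem tendsto_log_div_sub_one {ι : Type*} {l : Filter ι} {r : ι → ℝ}
    (hr : Tendsto r l (𝓝 1)) (hr₁ : ∀ᶠ i in l, r i ≠ 1) :
    Tendsto (fun i => Real.log (r i) / (r i - 1)) l (𝓝 1) := by
  have hslope := hasDerivAt_iff_tendsto_slope.1 (Real.hasDerivAt_log one_ne_zero)
  rw [inv_one] at hslope
  refine (hslope.comp (tendsto_nhdsWithin_iff.2 ⟨hr, hr₁⟩)).congr fun i => ?_
  simp [slope_def_field, Real.log_one]

section DefectiveScaling

variable {r B : ℕ → ℝ} {y : ℝ}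

theorem tendsto_sub_one_mul_exp (hr : ∀ n, 1 < r n) (hB : Tendsto B atTop atTop)
    (hry : Tendsto (fun n => Real.log (1 / (r n - 1)) / B n) atTop (𝓝 y)) {u : ℝ} (hu : u < y) :
    Tendsto (fun n => (r n - 1) * Real.exp (u * B n)) atTop (𝓝 0) := by
  have hexp : Tendsto (fun n => (Real.log (1 / (r n - 1)) / B n - u) * B n) atTop atTop :=
    (hry.sub_const u).pos_mul_atTop (sub_pos.2 hu) hB
  refine (Real.tendsto_exp_neg_atTop_nhds_zero.comp hexp).congr' ?_
  filter_upwards [hB.eventually_gt_atTop 0] with n hn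
  rw [Function.comp_apply, sub_mul, div_mul_cancel₀ _ hn.ne', one_div, Real.log_inv, neg_sub,
    sub_neg_eq_add, Real.exp_add, Real.exp_log (sub_pos.2 (hr n)), mul_comm u, mul_comm]

theorem tendsto_one_of_log_inv_sub_one_div (hr : ∀ n, 1 < r n) (hB : Tendsto B atTop atTop)
    (hry : Tendsto (fun n => Real.log (1 / (r n - 1)) / B n) atTop (𝓝 y)) (hy : 0 < y) :
    Tendsto r atTop (𝓝 1) := by
  simpa using (tendsto_sub_one_mul_exp hr hB hry hy).add_const 1

theorem tendsto_neg_log_log_div (hr : ∀ n, 1 < r n) (hB : Tendsto B atTop atTop)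
    (hry : Tendsto (fun n => Real.log (1 / (r n - 1)) / B n) atTop (𝓝 y)) (hy : 0 < y) :
    Tendsto (fun n => -Real.log (Real.log (r n)) / B n) atTop (𝓝 y) := by
  have hc := tendsto_log_div_sub_one (tendsto_one_of_log_inv_sub_one_div hr hB hry hy)
    (.of_forall fun n => (hr n).ne')
  have := hry.sub (hc.log_div_atTop one_ne_zero hB)
  rw [sub_zero] at this
  refine this.congr fun n => ?_
  rw [Real.log_div (Real.log_pos (hr n)).ne' (sub_pos.2 (hr n)).ne', one_div, Real.log_inv]
  ring

theorem tendsto_neg_log_add_log_div (hr : ∀ n, 1 < r n) (hB : Tendsto B atTop atTop)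
    (hry : Tendsto (fun n => Real.log (1 / (r n - 1)) / B n) atTop (𝓝 y)) (hy : 0 < y)
    {lam u : ℝ} (hlam : 0 < lam) (hu : u < y) :
    Tendsto (fun n => -Real.log (lam * Real.exp (-u * B n) + Real.log (r n)) / B n) atTop
      (𝓝 u) := by
  have hc := tendsto_log_div_sub_one (tendsto_one_of_log_inv_sub_one_div hr hB hry hy)
    (.of_forall fun n => (hr n).ne')
  have hd : Tendsto (fun n => lam + Real.log (r n) / (r n - 1) * ((r n - 1) *
      Real.exp (u * B n))) atTop (𝓝 lam) := by
    simpa using (hc.mul (tendsto_sub_one_mul_exp hr hB hry hu)).const_add lam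
  have := (tendsto_const_nhds (x := u)).sub (hd.log_div_atTop hlam.ne' hB)
  rw [sub_zero] at this
  refine this.congr' ?_
  filter_upwards [hB.eventually_gt_atTop 0] with n hn
  have hpos : 0 < lam + Real.log (r n) / (r n - 1) * ((r n - 1) * Real.exp (u * B n)) := by
    have := Real.log_pos (hr n); have := sub_pos.2 (hr n); positivity
  have hfactor : lam * Real.exp (-u * B n) + Real.log (r n) = Real.exp (-u * B n) *
      (lam + Real.log (r n) / (r n - 1) * ((r n - 1) * Real.exp (u * B n))) := by
    have he : Real.exp (-u * B n) * Real.exp (u * B n) = 1 := by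
      rw [← Real.exp_add, neg_mul, neg_add_cancel, Real.exp_zero]
    rw [← mul_assoc, div_mul_cancel₀ _ (sub_pos.2 (hr n)).ne']
    linear_combination -Real.log (r n) * he
  rw [hfactor, Real.log_mul (Real.exp_pos _).ne' hpos.ne', Real.log_exp]
  field_simp
  ring

end DefectiveScaling

theorem stmt_13_general
    (phat : ℕ → ℝ) (fhat : ℝ → ℝ) (qhat : ℝ) (b : ℝ) (psi : ℝ → ℝ)
    (hphat : ∀ k, 0 ≤ phat k) (hsum : HasSum phat 1)
    (hfhat : ∀ s : ℝ, fhat s = ∑' k, phat k * s ^ k)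
    (hqhat : qhat ∈ Set.Ico (0 : ℝ) 1) (hfix : fhat qhat = qhat)
    (hqmin : ∀ x ∈ Set.Icc (0 : ℝ) 1, fhat x = x → qhat ≤ x)
    (hb : 1 < b)
    (hpsirange : ∀ u : ℝ, 0 < u → psi u ∈ Set.Ioo (0 : ℝ) 1)
    (hpsi : ∀ u : ℝ, 0 < u → ∀ ut : ℕ → ℝ, Tendsto ut atTop (nhds u) →
        Tendsto
          (fun t : ℕ => fhat^[t] (Real.exp (-Real.exp (-ut t * b ^ t))))
          atTop (nhds (qhat + (1 - qhat) * psi u)))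
    (r : ℕ → ℝ) (t : ℕ → ℕ) (y : ℝ)
    (hr : ∀ n, 1 < r n) (ht : Tendsto t atTop atTop) (hy : 0 < y)
    (hry : Tendsto (fun n => Real.log (1 / (r n - 1)) / b ^ t n) atTop (nhds y)) :
    Tendsto (fun n => r n * fhat^[t n] (1 / r n) - r n * fhat^[t n] 0) atTop
      (nhds ((1 - qhat) * psi y)) ∧
    ∀ lam : ℝ, 0 < lam → ∀ u ∈ Set.Ioo (0 : ℝ) y,
      Tendsto
        (fun n =>
          (r n * fhat^[t n] (Real.exp (-lam * Real.exp (-u * b ^ t n)) / r n) -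
              r n * fhat^[t n] 0) /
            (r n * fhat^[t n] (1 / r n) - r n * fhat^[t n] 0))
        atTop (nhds (psi u / psi y)) := by
  have hzero : Tendsto (fun n => fhat^[t n] 0) atTop (𝓝 qhat) :=
    (tendsto_iterate_zero_of_tsum_mul_pow hphat hsum.summable hfhat ⟨hqhat.1, hqhat.2.le⟩ hfix
      hqmin).comp ht
  have hB : Tendsto (fun n => b ^ t n) atTop atTop :=
    (tendsto_pow_atTop_atTop_of_one_lt hb).comp ht
  have hr1 := tendsto_one_of_log_inv_sub_one_div hr hB hry hy
  have hscaled : ∀ {x : ℝ} {F : ℕ → ℝ}, Tendsto F atTop (𝓝 (qhat + (1 - qhat) * psi x)) →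
      Tendsto (fun n => r n * F n - r n * fhat^[t n] 0) atTop (𝓝 ((1 - qhat) * psi x)) :=
    fun hF => by simpa using (hr1.mul hF).sub (hr1.mul hzero)
  have hb0 : b ≠ 0 := (zero_lt_one.trans hb).ne'
  have hone : Tendsto (fun n => fhat^[t n] (1 / r n)) atTop
      (𝓝 (qhat + (1 - qhat) * psi y)) := by
    refine (tendsto_iterate_exp_neg hb0 (hpsi y hy) ht (fun n => Real.log_pos (hr n))
      (tendsto_neg_log_log_div hr hB hry hy)).congr fun n => ?_
    rw [Real.exp_neg, Real.exp_log (zero_lt_one.trans (hr n)), one_div]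
  refine ⟨hscaled hone, fun lam hlam u hu => ?_⟩
  have hnum : Tendsto (fun n => fhat^[t n] (Real.exp (-lam * Real.exp (-u * b ^ t n)) / r n))
      atTop (𝓝 (qhat + (1 - qhat) * psi u)) := by
    refine (tendsto_iterate_exp_neg hb0 (hpsi u hu.1) ht
      (fun n => add_pos (mul_pos hlam (Real.exp_pos _)) (Real.log_pos (hr n)))
      (tendsto_neg_log_add_log_div hr hB hry hy hlam hu.2)).congr fun n => ?_
    rw [neg_add, Real.exp_add, Real.exp_neg (Real.log _), Real.exp_log (zero_lt_one.trans (hr n)),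
      ← div_eq_mul_inv, neg_mul lam]
  have hq : 0 < 1 - qhat := sub_pos.2 hqhat.2
  have := (hscaled hnum).div (hscaled hone) (mul_pos hq (hpsirange y hy).1).ne'
  rwa [mul_div_mul_left _ _ hq.ne'] at this

/-- Theorem 3(b): let `fhat` be a proper pgf with infinite mean, smallest fixed
point `qhat ∈ [0,1)`. Let `b > 1` and `psi` be Darling's double-exponential limit:
continuous, strictly increasing on `(0,∞)` with values in `(0,1)`, `psi(u) → 0` as
`u → 0+`, `psi(u) → 1` as `u → ∞`, and
`fhat^[t](exp(-exp(-u_t b^t))) → qhat + (1-qhat) psi(u)` whenever `u_t → u > 0`.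
For `r > 1` set `f_r(s) = r fhat(s/r)`. If `r_n > 1`, `t_n → ∞` and
`b^{-t_n} ln(1/(r_n-1)) → y ∈ (0,∞)`, then
`P(T_n > t_n) = f_{r_n}^[t_n](1) - f_{r_n}^[t_n](0) → (1-qhat) psi(y)`, and for
`λ > 0`, `u ∈ (0,y)`, the corresponding conditional law converges to `psi(u)/psi(y)`. -/
theorem stmt_13
    (phat : ℕ → ℝ) (fhat : ℝ → ℝ) (qhat : ℝ) (b : ℝ) (psi : ℝ → ℝ)
    (hphat : ∀ k, 0 ≤ phat k) (hsum : HasSum phat 1)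
    (hfhat : ∀ s : ℝ, fhat s = ∑' k, phat k * s ^ k)
    (hmean : ¬ Summable fun k : ℕ => (k : ℝ) * phat k)
    (hqhat : qhat ∈ Set.Ico (0 : ℝ) 1) (hfix : fhat qhat = qhat)
    (hqmin : ∀ x ∈ Set.Icc (0 : ℝ) 1, fhat x = x → qhat ≤ x)
    (hb : 1 < b)
    (hpsicont : ContinuousOn psi (Set.Ioi 0))
    (hpsimono : StrictMonoOn psi (Set.Ioi 0))
    (hpsirange : ∀ u : ℝ, 0 < u → psi u ∈ Set.Ioo (0 : ℝ) 1)
    (hpsi0 : Tendsto psi (nhdsWithin 0 (Set.Ioi 0)) (nhds 0))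
    (hpsi1 : Tendsto psi atTop (nhds 1))
    (hpsi : ∀ u : ℝ, 0 < u → ∀ ut : ℕ → ℝ, Tendsto ut atTop (nhds u) →
        Tendsto
          (fun t : ℕ => fhat^[t] (Real.exp (-Real.exp (-ut t * b ^ t))))
          atTop (nhds (qhat + (1 - qhat) * psi u)))
    (r : ℕ → ℝ) (t : ℕ → ℕ) (y : ℝ)
    (hr : ∀ n, 1 < r n) (ht : Tendsto t atTop atTop) (hy : 0 < y)
    (hry : Tendsto (fun n => Real.log (1 / (r n - 1)) / b ^ t n) atTop (nhds y)) :
    Tendsto (fun n => r n * fhat^[t n] (1 / r n) - r n * fhat^[t n] 0) atTop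
      (nhds ((1 - qhat) * psi y)) ∧
    ∀ lam : ℝ, 0 < lam → ∀ u ∈ Set.Ioo (0 : ℝ) y,
      Tendsto
        (fun n =>
          (r n * fhat^[t n] (Real.exp (-lam * Real.exp (-u * b ^ t n)) / r n) -
              r n * fhat^[t n] 0) /
            (r n * fhat^[t n] (1 / r n) - r n * fhat^[t n] 0))
        atTop (nhds (psi u / psi y)) :=
  stmt_13_general phat fhat qhat b psi hphat hsum hfhat hqhat hfix hqmin hb hpsirange hpsi r t y hr
    ht hy hry
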